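/- Let G be a finitely generated group, X a bounded Banach G-module, and ℰ ⊆ ℓ∞(G, X*) a weak-* closed Hopf G-module. Define E_h : ℓ∞(G, ℰ) → ℓ∞(G, X*) by (E_h η)_g = (η_g)_g (where each η_g ∈ ℰ ⊆ ℓ∞(G, X*) is evaluated at g). Then: (1) E_h takes values in ℰ, i.e., E_h(η) ∈ ℰ for every η ∈ ℓ∞(G, ℰ); (2) E_h is linear with norm at most 1; (3) E_h is G-equivariant: E_h(g * η) = g * E_h(η) for all g ∈ G and η ∈ ℓ∞(G, ℰ), where G acts on ℓ∞(G, ℰ) by (g * η)_h = g * (η_{g⁻¹h}) using the restricted action on ℰ; and (4) E_h(ι(x)) = x for every x ∈ ℰ, where ι : ℰ → ℓ∞(G, ℰ) is the inclusion as constant functions, ι(x)_g = x. -/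

import Mathlib

/-! The truncations of `E_h η` to finite sets `F ⊆ G` are finite sums of the `η_g` cut down to
`{g}` by the `ℓ∞(G)`-action, so they lie in `ℰ`. Pairing with `ν ∈ ℓ₁(G, X)` is an absolutely
summable series, so the truncations converge weak-* to `E_h η`, which therefore lies in the
weak-* closed `ℰ`. Linearity, the norm bound, equivariance and `E_h ∘ ι = id` hold pointwise. -/

set_option synthInstance.maxHeartbeats 1000000
set_option maxHeartbeats 1000000

open scoped ENNReal
set_option linter.unusedSectionVars false

noncomputable section

variable {G : Type*} [Group G]
variable {X : Type*} [NormedAddCommGroup X] [NormedSpace ℝ X]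

/-- Build an element of `ℓ∞(G, Z)` from a uniformly bounded function. -/
def linfElem {Z : Type*} [NormedAddCommGroup Z] (f : G → Z) (C : ℝ) (h : ∀ g, ‖f g‖ ≤ C) :
    lp (fun _ : G => Z) ∞ :=
  ⟨f, memℓp_infty ⟨C, by rintro r ⟨g, rfl⟩; exact h g⟩⟩

@[simp] lemma linfElem_apply {Z : Type*} [NormedAddCommGroup Z] (f : G → Z) (C : ℝ)
    (h : ∀ g, ‖f g‖ ≤ C) (g : G) : linfElem f C h g = f g := rfl

/-- The action `•` of `ℓ∞(G)` on `ℓ∞(G, Z)`: `(a • f)_g = a_g f_g`. -/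
def bullet {Z : Type*} [NormedAddCommGroup Z] [NormedSpace ℝ Z]
    (a : lp (fun _ : G => ℝ) ∞) (f : lp (fun _ : G => Z) ∞) :
    lp (fun _ : G => Z) ∞ :=
  linfElem (fun g => a g • f g) (‖a‖ * ‖f‖) (by
    intro g
    rw [norm_smul]
    exact mul_le_mul (lp.norm_apply_le_norm ENNReal.top_ne_zero a g)
      (lp.norm_apply_le_norm ENNReal.top_ne_zero f g) (norm_nonneg _) (norm_nonneg _))

/-- The action of `G` on `ℓ∞(G, X*)` given by `(g * f)_h = g (f_{g⁻¹h})`, where `G` acts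
on `X*` by the dual action `(gφ)(x) = φ(g⁻¹ x)` of a representation `ρ` of `G` on `X`. -/
def starA (ρ : G →* X →L[ℝ] X) (g : G) (φ : lp (fun _ : G => X →L[ℝ] ℝ) ∞) :
    lp (fun _ : G => X →L[ℝ] ℝ) ∞ :=
  linfElem (fun h => (φ (g⁻¹ * h)).comp (ρ g⁻¹)) (‖ρ g⁻¹‖ * ‖φ‖) (by
    intro h
    calc ‖(φ (g⁻¹ * h)).comp (ρ g⁻¹)‖ ≤ ‖φ (g⁻¹ * h)‖ * ‖ρ g⁻¹‖ :=
          ContinuousLinearMap.opNorm_comp_le _ _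
      _ ≤ ‖ρ g⁻¹‖ * ‖φ‖ := by
          rw [mul_comm]
          gcongr
          exact lp.norm_apply_le_norm ENNReal.top_ne_zero φ _)

/-- The weak-* topology on `ℓ∞(G, X*)` as the dual of `ℓ₁(G, X)`: the coarsest topology
making `φ ↦ ∑_g φ_g(η_g)` continuous for every `η ∈ ℓ₁(G, X)`. -/
def wstar (G : Type*) (X : Type*) [NormedAddCommGroup X] [NormedSpace ℝ X] :
    TopologicalSpace (lp (fun _ : G => X →L[ℝ] ℝ) ∞) :=
  ⨅ η : lp (fun _ : G => X) 1,
    TopologicalSpace.induced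
      (fun φ : lp (fun _ : G => X →L[ℝ] ℝ) ∞ => ∑' g : G, φ g (η g)) inferInstance

end

noncomputable section

variable {G : Type*} [Group G]
variable {X : Type*} [NormedAddCommGroup X] [NormedSpace ℝ X]

lemma starA_norm_le (ρ : G →* X →L[ℝ] X) (g : G) (φ : lp (fun _ : G => X →L[ℝ] ℝ) ∞) :
    ‖starA ρ g φ‖ ≤ ‖ρ g⁻¹‖ * ‖φ‖ :=
  lp.norm_le_of_forall_le (mul_nonneg (norm_nonneg _) (norm_nonneg _)) fun h => by
    rw [starA]; simp only [linfElem_apply]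
    calc ‖(φ (g⁻¹ * h)).comp (ρ g⁻¹)‖ ≤ ‖φ (g⁻¹ * h)‖ * ‖ρ g⁻¹‖ :=
          ContinuousLinearMap.opNorm_comp_le _ _
      _ ≤ ‖ρ g⁻¹‖ * ‖φ‖ := by
          rw [mul_comm]
          gcongr
          exact lp.norm_apply_le_norm ENNReal.top_ne_zero φ _

/-- The map `E_h : ℓ∞(G, ℰ) → ℓ∞(G, X*)`, `(E_h η)_g = (η_g)_g`, for a subspace
`ℰ ⊆ ℓ∞(G, X*)`. -/
def Eh (ℰ : Submodule ℝ (lp (fun _ : G => X →L[ℝ] ℝ) ∞))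
    (η : lp (fun _ : G => ↥ℰ) ∞) : lp (fun _ : G => X →L[ℝ] ℝ) ∞ :=
  linfElem (fun g => ((η g : lp (fun _ : G => X →L[ℝ] ℝ) ∞) : G → X →L[ℝ] ℝ) g) ‖η‖
    (fun g =>
      (lp.norm_apply_le_norm ENNReal.top_ne_zero
          (η g : lp (fun _ : G => X →L[ℝ] ℝ) ∞) g).trans
        (lp.norm_apply_le_norm ENNReal.top_ne_zero η g))

/-- The action of `G` on `ℓ∞(G, ℰ)`: `(g * η)_h = g * (η_{g⁻¹h})`, using the restriction
of the action `*` on `ℓ∞(G, X*)` to a `G`-invariant subspace `ℰ`. -/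
def starE (ℰ : Submodule ℝ (lp (fun _ : G => X →L[ℝ] ℝ) ∞)) (ρ : G →* X →L[ℝ] X)
    (hstar : ∀ (g : G), ∀ φ ∈ ℰ, starA ρ g φ ∈ ℰ) (g : G)
    (η : lp (fun _ : G => ↥ℰ) ∞) : lp (fun _ : G => ↥ℰ) ∞ :=
  linfElem
    (fun h => (⟨starA ρ g ↑(η (g⁻¹ * h)), hstar g _ (η (g⁻¹ * h)).2⟩ : ↥ℰ))
    (‖ρ g⁻¹‖ * ‖η‖) (by
      intro h
      show ‖starA ρ g (↑(η (g⁻¹ * h)) : lp (fun _ : G => X →L[ℝ] ℝ) ∞)‖ ≤ ‖ρ g⁻¹‖ * ‖η‖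
      refine (starA_norm_le ρ g _).trans ?_
      gcongr
      show ‖η (g⁻¹ * h)‖ ≤ ‖η‖
      exact lp.norm_apply_le_norm ENNReal.top_ne_zero η _)

/-- The inclusion `ι : ℰ → ℓ∞(G, ℰ)` as constant functions. -/
def constE {ℰ : Submodule ℝ (lp (fun _ : G => X →L[ℝ] ℝ) ∞)} (x : ↥ℰ) :
    lp (fun _ : G => ↥ℰ) ∞ :=
  linfElem (fun _ => x) ‖x‖ (fun _ => le_rfl)

end


open Filter Topology

noncomputable section

variable {G : Type*} [Group G] {X : Type*} [NormedAddCommGroup X] [NormedSpace ℝ X]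

lemma tendsto_wstar_iff {ι : Type*} {l : Filter ι} {f : ι → lp (fun _ : G => X →L[ℝ] ℝ) ∞}
    {φ : lp (fun _ : G => X →L[ℝ] ℝ) ∞} :
    Tendsto f l (@nhds _ (wstar G X) φ) ↔
      ∀ ν : lp (fun _ : G => X) 1, Tendsto (fun i => ∑' g, f i g (ν g)) l (𝓝 (∑' g, φ g (ν g))) := by
  rw [wstar, nhds_iInf, tendsto_iInf]
  simp only [nhds_induced, tendsto_comap_iff, Function.comp_def]

lemma summable_pairing (φ : lp (fun _ : G => X →L[ℝ] ℝ) ∞) (ν : lp (fun _ : G => X) 1) :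
    Summable fun g => φ g (ν g) := by
  have hν : Summable fun g => ‖ν g‖ := by
    simpa using ν.2.summable (by norm_num : (0 : ℝ) < (1 : ℝ≥0∞).toReal)
  refine .of_norm_bounded (hν.mul_left ‖φ‖) fun g => ?_
  calc ‖φ g (ν g)‖ ≤ ‖φ g‖ * ‖ν g‖ := (φ g).le_opNorm _
    _ ≤ ‖φ‖ * ‖ν g‖ := by gcongr; exact lp.norm_apply_le_norm ENNReal.top_ne_zero φ g

def finsetIndicator (F : Finset G) : lp (fun _ : G => ℝ) ∞ :=
  linfElem ((F : Set G).indicator 1) 1 fun _ => (norm_indicator_le_norm_self _ _).trans (by simp)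

lemma bullet_finsetIndicator_apply (F : Finset G) (φ : lp (fun _ : G => X →L[ℝ] ℝ) ∞) (g : G) :
    bullet (finsetIndicator F) φ g = (F : Set G).indicator φ g := by
  by_cases hg : g ∈ F <;> simp [bullet, finsetIndicator, hg]

lemma tendsto_bullet_finsetIndicator_wstar (φ : lp (fun _ : G => X →L[ℝ] ℝ) ∞) :
    Tendsto (fun F : Finset G => bullet (finsetIndicator F) φ) atTop (@nhds _ (wstar G X) φ) := by
  refine tendsto_wstar_iff.2 fun ν => ?_
  have htrunc : ∀ F : Finset G, ∑' g, bullet (finsetIndicator F) φ g (ν g) = ∑ g ∈ F, φ g (ν g) := by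
    intro F
    rw [tsum_eq_sum (s := F) fun g hg => by simp [bullet_finsetIndicator_apply, hg]]
    exact Finset.sum_congr rfl fun g hg => by simp [bullet_finsetIndicator_apply, hg]
  simp only [htrunc]
  exact (summable_pairing φ ν).hasSum

variable {ℰ : Submodule ℝ (lp (fun _ : G => X →L[ℝ] ℝ) ∞)}

@[simp] lemma Eh_apply (η : lp (fun _ : G => ↥ℰ) ∞) (g : G) :
    Eh ℰ η g = (η g : lp (fun _ : G => X →L[ℝ] ℝ) ∞) g :=
  rfl

lemma Eh_add (η η' : lp (fun _ : G => ↥ℰ) ∞) : Eh ℰ (η + η') = Eh ℰ η + Eh ℰ η' :=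
  rfl

lemma Eh_smul (c : ℝ) (η : lp (fun _ : G => ↥ℰ) ∞) : Eh ℰ (c • η) = c • Eh ℰ η :=
  rfl

lemma norm_Eh_le (η : lp (fun _ : G => ↥ℰ) ∞) : ‖Eh ℰ η‖ ≤ ‖η‖ :=
  lp.norm_le_of_forall_le (norm_nonneg η) fun g =>
    (lp.norm_apply_le_norm ENNReal.top_ne_zero (η g : lp (fun _ : G => X →L[ℝ] ℝ) ∞) g).trans
      (lp.norm_apply_le_norm ENNReal.top_ne_zero η g)

lemma Eh_starE (ρ : G →* X →L[ℝ] X) (hstar : ∀ (g : G), ∀ φ ∈ ℰ, starA ρ g φ ∈ ℰ) (g : G)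
    (η : lp (fun _ : G => ↥ℰ) ∞) : Eh ℰ (starE ℰ ρ hstar g η) = starA ρ g (Eh ℰ η) :=
  rfl

lemma Eh_constE (x : ↥ℰ) : Eh ℰ (constE x) = (x : lp (fun _ : G => X →L[ℝ] ℝ) ∞) :=
  rfl

lemma bullet_finsetIndicator_Eh (F : Finset G) (η : lp (fun _ : G => ↥ℰ) ∞) :
    bullet (finsetIndicator F) (Eh ℰ η) =
      ∑ g ∈ F, bullet (finsetIndicator {g}) (η g : lp (fun _ : G => X →L[ℝ] ℝ) ∞) := by
  classical
  refine lp.ext (funext fun h => ?_)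
  rw [lp.coeFn_sum, Finset.sum_apply]
  simp [bullet_finsetIndicator_apply, Set.indicator_apply]

lemma Eh_mem (hbullet : ∀ (a : lp (fun _ : G => ℝ) ∞), ∀ φ ∈ ℰ, bullet a φ ∈ ℰ)
    (hclosed : @IsClosed _ (wstar G X) (ℰ : Set (lp (fun _ : G => X →L[ℝ] ℝ) ∞)))
    (η : lp (fun _ : G => ↥ℰ) ∞) : Eh ℰ η ∈ ℰ :=
  @IsClosed.mem_of_tendsto _ (wstar G X) _ _ _ _ _ _ hclosed (tendsto_bullet_finsetIndicator_wstar _)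
    (Eventually.of_forall fun F => by
      rw [bullet_finsetIndicator_Eh]
      exact Submodule.sum_mem _ fun g _ => hbullet _ _ (η g).2)

end

theorem Eh_properties_general
    {G : Type*} [Group G]
    {X : Type*} [NormedAddCommGroup X] [NormedSpace ℝ X]
    (ρ : G →* X →L[ℝ] X)
    (ℰ : Submodule ℝ (lp (fun _ : G => X →L[ℝ] ℝ) ∞))
    (hstar : ∀ (g : G), ∀ φ ∈ ℰ, starA ρ g φ ∈ ℰ)
    (hbullet : ∀ (a : lp (fun _ : G => ℝ) ∞), ∀ φ ∈ ℰ, bullet a φ ∈ ℰ)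
    (hclosed : @IsClosed _ (wstar G X) (ℰ : Set (lp (fun _ : G => X →L[ℝ] ℝ) ∞))) :
    (∀ η : lp (fun _ : G => ↥ℰ) ∞, Eh ℰ η ∈ ℰ) ∧
    (∀ η η' : lp (fun _ : G => ↥ℰ) ∞, Eh ℰ (η + η') = Eh ℰ η + Eh ℰ η') ∧
    (∀ (c : ℝ) (η : lp (fun _ : G => ↥ℰ) ∞), Eh ℰ (c • η) = c • Eh ℰ η) ∧
    (∀ η : lp (fun _ : G => ↥ℰ) ∞, ‖Eh ℰ η‖ ≤ ‖η‖) ∧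
    (∀ (g : G) (η : lp (fun _ : G => ↥ℰ) ∞),
        Eh ℰ (starE ℰ ρ hstar g η) = starA ρ g (Eh ℰ η)) ∧
    (∀ x : ↥ℰ, Eh ℰ (constE x) = (x : lp (fun _ : G => X →L[ℝ] ℝ) ∞)) :=
  ⟨Eh_mem hbullet hclosed, Eh_add, Eh_smul, norm_Eh_le, Eh_starE ρ hstar, Eh_constE⟩

/-- **Properties of the map `E_h`.**  Let `G` be a finitely generated group, `X` a
bounded Banach `G`-module and `ℰ ⊆ ℓ∞(G, X*)` a weak-* closed Hopf `G`-module.  The map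
`E_h : ℓ∞(G, ℰ) → ℓ∞(G, X*)`, `(E_h η)_g = (η_g)_g`, (1) takes values in `ℰ`, (2) is
linear of norm at most 1, (3) is `G`-equivariant, and (4) is a left inverse of the
inclusion of `ℰ` into `ℓ∞(G, ℰ)` as constant functions. -/
theorem Eh_properties
    {G : Type*} [Group G] [Group.FG G]
    {X : Type*} [NormedAddCommGroup X] [NormedSpace ℝ X] [CompleteSpace X]
    (ρ : G →* X →L[ℝ] X) (C : ℝ) (hρ : ∀ g : G, ‖ρ g‖ ≤ C)
    (ℰ : Submodule ℝ (lp (fun _ : G => X →L[ℝ] ℝ) ∞))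
    (hstar : ∀ (g : G), ∀ φ ∈ ℰ, starA ρ g φ ∈ ℰ)
    (hbullet : ∀ (a : lp (fun _ : G => ℝ) ∞), ∀ φ ∈ ℰ, bullet a φ ∈ ℰ)
    (hclosed : @IsClosed _ (wstar G X) (ℰ : Set (lp (fun _ : G => X →L[ℝ] ℝ) ∞))) :
    (∀ η : lp (fun _ : G => ↥ℰ) ∞, Eh ℰ η ∈ ℰ) ∧
    (∀ η η' : lp (fun _ : G => ↥ℰ) ∞, Eh ℰ (η + η') = Eh ℰ η + Eh ℰ η') ∧
    (∀ (c : ℝ) (η : lp (fun _ : G => ↥ℰ) ∞), Eh ℰ (c • η) = c • Eh ℰ η) ∧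
    (∀ η : lp (fun _ : G => ↥ℰ) ∞, ‖Eh ℰ η‖ ≤ ‖η‖) ∧
    (∀ (g : G) (η : lp (fun _ : G => ↥ℰ) ∞),
        Eh ℰ (starE ℰ ρ hstar g η) = starA ρ g (Eh ℰ η)) ∧
    (∀ x : ↥ℰ, Eh ℰ (constE x) = (x : lp (fun _ : G => X →L[ℝ] ℝ) ∞)) :=
  Eh_properties_general ρ ℰ hstar hbullet hclosed
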